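/- arXiv:2602.09948 — 4 statements merged into one kernel-verified Lean document; each statement's English description precedes it below -/
import Mathlib

section
/- There exists a universal constant C > 0 such that the following holds. Let k ≥ 2, t ≥ 1, and let F = {f_1, …, f_m} be a t-sparse family of coverage functions on ground set [n] such that every set S ∈ S satisfies |S| ≥ C · k · ln(tk + 2). Then there exists a k-coloring χ : [n] → [k] with disc(F, χ) = 0. -/
open Finset

/-- Coverage function determined by a multiset `C` of subsets of `[n]`:
`f(T) = Σ_{S ∈ C} min(|S ∩ T|, 1)`. -/
noncomputable def cov {n : ℕ} (C : Multiset (Finset (Fin n))) (T : Finset (Fin n)) : ℝ :=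
  (C.map (fun s => min ((s ∩ T).card : ℝ) 1)).sum

/-- The color class `χ⁻¹(ℓ)` of a `k`-coloring `χ : [n] → [k]`. -/
def colorClass {n k : ℕ} (χ : Fin n → Fin k) (ℓ : Fin k) : Finset (Fin n) :=
  Finset.univ.filter (fun j => χ j = ℓ)




section LLL
set_option linter.unusedSectionVars false
variable {Ω : Type*} [Fintype Ω] [DecidableEq Ω]
variable {ι : Type*} [Fintype ι] [DecidableEq ι]

/-- Intersection of complements of the events indexed by `S`. -/
noncomputable def Abar (A : ι → Finset Ω) (S : Finset ι) : Finset Ω :=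
  @Finset.filter _ (fun ω => ∀ j ∈ S, ω ∉ A j) (Classical.decPred _) Finset.univ

lemma mem_Abar {A : ι → Finset Ω} {S : Finset ι} {ω : Ω} :
    ω ∈ Abar A S ↔ ∀ j ∈ S, ω ∉ A j := by
  simp [Abar]

lemma Abar_empty (A : ι → Finset Ω) : Abar A ∅ = Finset.univ := by
  ext ω; simp [mem_Abar]

lemma Abar_insert (A : ι → Finset Ω) (j : ι) (S : Finset ι) :
    Abar A (insert j S) = Abar A S \ A j := by
  ext ω
  simp only [mem_Abar, Finset.mem_sdiff, Finset.mem_insert]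
  constructor
  · intro h
    exact ⟨fun i hi => h i (Or.inr hi), h j (Or.inl rfl)⟩
  · rintro ⟨h1, h2⟩ i (rfl | hi)
    · exact h2
    · exact h1 i hi

lemma Abar_anti (A : ι → Finset Ω) {S S' : Finset ι} (h : S ⊆ S') :
    Abar A S' ⊆ Abar A S := by
  intro ω hω
  rw [mem_Abar] at hω ⊢
  exact fun j hj => hω j (h hj)

lemma card_Abar_insert (A : ι → Finset Ω) (j : ι) (S : Finset ι) :
    ((Abar A (insert j S)).card : ℝ) =
      (Abar A S).card - ((A j ∩ Abar A S).card : ℝ) := by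
  rw [Abar_insert]
  have h1 : Abar A S \ A j = Abar A S \ (A j ∩ Abar A S) := by
    ext ω; simp only [Finset.mem_sdiff, Finset.mem_inter]; tauto
  rw [h1, Finset.card_sdiff_of_subset Finset.inter_subset_right, Nat.cast_sub
    (Finset.card_le_card Finset.inter_subset_right)]

lemma lll_key [Nonempty Ω] (A : ι → Finset Ω) (Γ : ι → Finset ι) (D : ℕ) (x : ℝ)
    (hx0 : 0 < x) (hx1 : x < 1)
    (hp : ∀ i, ((A i).card : ℝ) ≤ x * (1 - x) ^ D * Fintype.card Ω)
    (hD : ∀ i, ((Γ i).erase i).card ≤ D)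
    (hind : ∀ (i : ι) (S : Finset ι), Disjoint S (Γ i) →
      ((A i ∩ Abar A S).card : ℝ) * Fintype.card Ω = (A i).card * (Abar A S).card) :
    ∀ (N : ℕ) (S : Finset ι), S.card ≤ N → ∀ i,
      ((A i ∩ Abar A S).card : ℝ) ≤ x * (Abar A S).card := by
  have hΩ : (0 : ℝ) < Fintype.card Ω := by
    exact_mod_cast Fintype.card_pos
  have h1x0 : (0:ℝ) ≤ 1 - x := by linarith
  have h1x1 : (1:ℝ) - x ≤ 1 := by linarith
  -- the basic consequence of independence
  have hbase : ∀ (i : ι) (S : Finset ι), Disjoint S (Γ i) →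
      ((A i ∩ Abar A S).card : ℝ) ≤ x * (1 - x) ^ D * (Abar A S).card := by
    intro i S hS
    have h := hind i S hS
    have h2 : ((A i ∩ Abar A S).card : ℝ) * Fintype.card Ω ≤
        (x * (1 - x) ^ D * (Abar A S).card) * Fintype.card Ω := by
      rw [h]
      calc ((A i).card : ℝ) * (Abar A S).card
          ≤ (x * (1 - x) ^ D * Fintype.card Ω) * (Abar A S).card := by
            apply mul_le_mul_of_nonneg_right (hp i) (by positivity)
        _ = (x * (1 - x) ^ D * (Abar A S).card) * Fintype.card Ω := by ring
    exact le_of_mul_le_mul_right h2 hΩ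
  intro N
  induction N with
  | zero =>
    intro S hS i
    have hSe : S = ∅ := Finset.card_eq_zero.mp (Nat.le_zero.mp hS)
    subst hSe
    have := hbase i ∅ (Finset.disjoint_empty_left _)
    calc ((A i ∩ Abar A ∅).card : ℝ) ≤ x * (1 - x) ^ D * (Abar A ∅).card := this
      _ ≤ x * 1 * (Abar A ∅).card := by
          apply mul_le_mul_of_nonneg_right _ (by positivity)
          apply mul_le_mul_of_nonneg_left _ (le_of_lt hx0)
          exact pow_le_one₀ h1x0 h1x1
      _ = x * (Abar A ∅).card := by ring
  | succ N ih =>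
    intro S hS i
    by_cases hcard : S.card ≤ N
    · exact ih S hcard i
    have hScard : S.card = N + 1 := le_antisymm hS (Nat.lt_of_not_le hcard)
    by_cases hiS : i ∈ S
    · have hempty : A i ∩ Abar A S = ∅ := by
        ext ω
        simp only [Finset.mem_inter, Finset.notMem_empty, iff_false, not_and]
        intro hA hB
        exact (mem_Abar.mp hB i hiS) hA
      rw [hempty]
      simp only [Finset.card_empty, Nat.cast_zero]
      positivity
    · set S₁ := S ∩ Γ i with hS₁
      set S₂ := S \ Γ i with hS₂
      have hdisj : Disjoint S₂ (Γ i) := Finset.sdiff_disjoint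
      have hnum : ((A i ∩ Abar A S₂).card : ℝ) ≤ x * (1 - x) ^ D * (Abar A S₂).card :=
        hbase i S₂ hdisj
      have hmono : (A i ∩ Abar A S) ⊆ A i ∩ Abar A S₂ :=
        Finset.inter_subset_inter (le_refl _) (Abar_anti A Finset.sdiff_subset)
      -- chain lemma
      have hchain : ∀ T : Finset ι, T ⊆ S₁ →
          (1 - x) ^ T.card * ((Abar A S₂).card : ℝ) ≤ (Abar A (S₂ ∪ T)).card := by
        intro T
        induction T using Finset.induction_on with
        | empty =>
          intro _
          simp
        | @insert j T hjT ihT =>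
          intro hsub
          have hTsub : T ⊆ S₁ := (Finset.subset_insert j T).trans hsub
          have hjS₁ : j ∈ S₁ := hsub (Finset.mem_insert_self j T)
          have hUcard : (S₂ ∪ T).card ≤ N := by
            have hjnot : j ∉ S₂ ∪ T := by
              intro hj
              rcases Finset.mem_union.mp hj with h | h
              · exact (Finset.mem_sdiff.mp h).2 (Finset.mem_inter.mp hjS₁).2
              · exact hjT h
            have hsubS : insert j (S₂ ∪ T) ⊆ S := by
              intro a ha
              rcases Finset.mem_insert.mp ha with rfl | ha
              · exact (Finset.mem_inter.mp hjS₁).1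
              · rcases Finset.mem_union.mp ha with h | h
                · exact (Finset.mem_sdiff.mp h).1
                · exact (Finset.mem_inter.mp (hTsub h)).1
            have := Finset.card_le_card hsubS
            rw [Finset.card_insert_of_notMem hjnot, hScard] at this
            omega
          have hkey := ih (S₂ ∪ T) hUcard j
          have hins : S₂ ∪ insert j T = insert j (S₂ ∪ T) := Finset.union_insert j S₂ T
          rw [hins, card_Abar_insert]
          have h2 := ihT hTsub
          rw [Finset.card_insert_of_notMem hjT]
          calc (1 - x) ^ (T.card + 1) * ((Abar A S₂).card : ℝ)
              = (1 - x) * ((1 - x) ^ T.card * (Abar A S₂).card) := by ring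
            _ ≤ (1 - x) * (Abar A (S₂ ∪ T)).card := by
                apply mul_le_mul_of_nonneg_left h2 h1x0
            _ = (Abar A (S₂ ∪ T)).card - x * (Abar A (S₂ ∪ T)).card := by ring
            _ ≤ ((Abar A (S₂ ∪ T)).card : ℝ) - (A j ∩ Abar A (S₂ ∪ T)).card := by
                linarith [hkey]
      have hS₁D : S₁.card ≤ D := by
        refine le_trans (Finset.card_le_card ?_) (hD i)
        intro a ha
        rw [Finset.mem_erase]
        refine ⟨?_, (Finset.mem_inter.mp ha).2⟩
        rintro rfl
        exact hiS (Finset.mem_inter.mp ha).1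
      have hunion : S₂ ∪ S₁ = S := by
        rw [hS₁, hS₂]
        ext a; simp only [Finset.mem_union, Finset.mem_sdiff, Finset.mem_inter]; tauto
      have hden : (1 - x) ^ D * ((Abar A S₂).card : ℝ) ≤ (Abar A S).card := by
        calc (1 - x) ^ D * ((Abar A S₂).card : ℝ)
            ≤ (1 - x) ^ S₁.card * ((Abar A S₂).card : ℝ) := by
              apply mul_le_mul_of_nonneg_right _ (by positivity)
              exact pow_le_pow_of_le_one h1x0 h1x1 hS₁D
          _ ≤ (Abar A (S₂ ∪ S₁)).card := hchain S₁ (le_refl _)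
          _ = ((Abar A S).card : ℝ) := by rw [hunion]
      calc ((A i ∩ Abar A S).card : ℝ)
          ≤ ((A i ∩ Abar A S₂).card : ℝ) := by
            exact_mod_cast Finset.card_le_card hmono
        _ ≤ x * (1 - x) ^ D * (Abar A S₂).card := hnum
        _ = x * ((1 - x) ^ D * (Abar A S₂).card) := by ring
        _ ≤ x * (Abar A S).card := mul_le_mul_of_nonneg_left hden (le_of_lt hx0)

lemma lll_nonempty [Nonempty Ω] (A : ι → Finset Ω) (Γ : ι → Finset ι) (D : ℕ) (x : ℝ)
    (hx0 : 0 < x) (hx1 : x < 1)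
    (hp : ∀ i, ((A i).card : ℝ) ≤ x * (1 - x) ^ D * Fintype.card Ω)
    (hD : ∀ i, ((Γ i).erase i).card ≤ D)
    (hind : ∀ (i : ι) (S : Finset ι), Disjoint S (Γ i) →
      ((A i ∩ Abar A S).card : ℝ) * Fintype.card Ω = (A i).card * (Abar A S).card) :
    ∃ ω : Ω, ∀ i, ω ∉ A i := by
  have key := lll_key A Γ D x hx0 hx1 hp hD hind
  have hpos : ∀ S : Finset ι, 0 < ((Abar A S).card : ℝ) := by
    intro S
    induction S using Finset.induction_on with
    | empty =>
      rw [Abar_empty]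
      simp only [Finset.card_univ]
      exact_mod_cast Fintype.card_pos
    | @insert j S hjS ihS =>
      rw [card_Abar_insert]
      have := key S.card S (le_refl _) j
      nlinarith
  obtain ⟨ω, hω⟩ := Finset.card_pos.mp (by exact_mod_cast hpos Finset.univ)
  exact ⟨ω, fun i => mem_Abar.mp hω i (Finset.mem_univ i)⟩

end LLL



/-- If `A` is determined by coordinates in `U` and `B` by coordinates outside `U`,
then `A` and `B` are "independent" in the counting sense. -/
lemma indep_card {n k : ℕ} (U : Finset (Fin n)) (A B : Finset (Fin n → Fin k))
    (hA : ∀ χ ψ : Fin n → Fin k, (∀ v ∈ U, χ v = ψ v) → (χ ∈ A ↔ ψ ∈ A))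
    (hB : ∀ χ ψ : Fin n → Fin k, (∀ v ∉ U, χ v = ψ v) → (χ ∈ B ↔ ψ ∈ B)) :
    (A ∩ B).card * Fintype.card (Fin n → Fin k) = A.card * B.card := by
  classical
  have key : ((A ∩ B) ×ˢ (univ : Finset (Fin n → Fin k))).card = (A ×ˢ B).card := by
    apply Finset.card_nbij'
      (i := fun p => ((fun v => if v ∈ U then p.1 v else p.2 v),
                      (fun v => if v ∈ U then p.2 v else p.1 v)))
      (j := fun p => ((fun v => if v ∈ U then p.1 v else p.2 v),
                      (fun v => if v ∈ U then p.2 v else p.1 v)))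
    · rintro ⟨ω, τ⟩ hp
      rw [Finset.mem_coe, Finset.mem_product] at hp ⊢
      obtain ⟨hωAB, -⟩ := hp
      rw [Finset.mem_inter] at hωAB
      constructor
      · exact (hA _ ω (fun v hv => by simp [hv])).mpr hωAB.1
      · exact (hB _ ω (fun v hv => by simp [hv])).mpr hωAB.2
    · rintro ⟨χ, ψ⟩ hp
      rw [Finset.mem_coe, Finset.mem_product] at hp ⊢
      obtain ⟨hχ, hψ⟩ := hp
      refine ⟨Finset.mem_inter.mpr ⟨?_, ?_⟩, Finset.mem_univ _⟩
      · exact (hA _ χ (fun v hv => by simp [hv])).mpr hχ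
      · exact (hB _ ψ (fun v hv => by simp [hv])).mpr hψ
    · rintro ⟨ω, τ⟩ _
      simp only [Prod.mk.injEq]
      constructor <;> funext v <;> by_cases hv : v ∈ U <;> simp [hv]
    · rintro ⟨χ, ψ⟩ _
      simp only [Prod.mk.injEq]
      constructor <;> funext v <;> by_cases hv : v ∈ U <;> simp [hv]
  rw [Finset.card_product, Finset.card_product, Finset.card_univ] at key
  omega

/-- Number of colorings avoiding color `ℓ` on all of `e`. -/
lemma card_avoid {n k : ℕ} (e : Finset (Fin n)) (ℓ : Fin k) :
    (Finset.univ.filter (fun χ : Fin n → Fin k => ∀ v ∈ e, χ v ≠ ℓ)).card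
      = (k - 1) ^ e.card * k ^ (n - e.card) := by
  classical
  rw [← Fintype.card_subtype]
  have e1 : {χ : Fin n → Fin k // ∀ v ∈ e, χ v ≠ ℓ} ≃
      ∀ v : Fin n, {c : Fin k // v ∈ e → c ≠ ℓ} := by
    exact Equiv.subtypePiEquivPi (p := fun (v : Fin n) (c : Fin k) => v ∈ e → c ≠ ℓ)
  rw [Fintype.card_congr e1, Fintype.card_pi]
  have hf : ∀ v : Fin n, Fintype.card {c : Fin k // v ∈ e → c ≠ ℓ}
      = if v ∈ e then k - 1 else k := by
    intro v
    by_cases hv : v ∈ e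
    · rw [if_pos hv]
      have : ∀ c : Fin k, (v ∈ e → c ≠ ℓ) ↔ c ≠ ℓ := fun c => by tauto
      rw [Fintype.card_subtype]
      have : Finset.univ.filter (fun c : Fin k => v ∈ e → c ≠ ℓ)
          = Finset.univ.erase ℓ := by
        ext c; simp [hv]
      rw [this, Finset.card_erase_of_mem (Finset.mem_univ _)]
      simp
    · rw [if_neg hv]
      rw [Fintype.card_subtype]
      have : Finset.univ.filter (fun c : Fin k => v ∈ e → c ≠ ℓ)
          = Finset.univ := by
        ext c; simp [hv]
      rw [this]
      simp
  calc (∏ v : Fin n, Fintype.card {c : Fin k // v ∈ e → c ≠ ℓ})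
      = ∏ v : Fin n, (if v ∈ e then k - 1 else k) := by
        exact Finset.prod_congr rfl (fun v _ => hf v)
    _ = (k - 1) ^ e.card * k ^ (n - e.card) := by
        rw [Finset.prod_ite]
        simp only [Finset.prod_const]
        congr 1
        · congr 1
          rw [Finset.filter_univ_mem]
        · congr 1
          have : Finset.univ.filter (fun v => v ∉ e) = eᶜ := by
            ext v; simp
          rw [this, Finset.card_compl, Fintype.card_fin]



lemma numeric_key (t k d D : ℕ) (ht : 1 ≤ t) (hk : 2 ≤ k) (hd1 : 1 ≤ d)
    (hd_ge : 12 * (k : ℝ) * Real.log ((t : ℝ) * k + 2) ≤ d)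
    (hd_le : (d : ℝ) ≤ 13 * k * Real.log ((t : ℝ) * k + 2))
    (hDdef : D = d * t * k) :
    ((k : ℝ) - 1) ^ d ≤
      (1 / (D + 1)) * (1 - 1 / (D + 1)) ^ D * (k : ℝ) ^ d := by
  set b : ℝ := (t : ℝ) * k + 2 with hb
  set L : ℝ := Real.log b with hL
  have htR : (1 : ℝ) ≤ t := by exact_mod_cast ht
  have hkR : (2 : ℝ) ≤ k := by exact_mod_cast hk
  have hk0 : (0 : ℝ) < k := by linarith
  have hb4 : (4 : ℝ) ≤ b := by nlinarith
  have hb0 : (0 : ℝ) < b := by linarith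
  have hL1 : (1 : ℝ) ≤ L := by
    rw [hL, Real.le_log_iff_exp_le hb0]
    calc Real.exp 1 ≤ 2.7182818286 := le_of_lt Real.exp_one_lt_d9
      _ ≤ 4 := by norm_num
      _ ≤ b := hb4
  have hL0 : (0 : ℝ) < L := by linarith
  have hLb : L ≤ b := le_trans (Real.log_le_sub_one_of_pos hb0) (by linarith)
  have hkb : (k : ℝ) ≤ b := by nlinarith
  have htkb : (t : ℝ) * k ≤ b := by linarith
  have hDR : (D : ℝ) = (d : ℝ) * t * k := by rw [hDdef]; push_cast; ring
  have hD0 : (0 : ℝ) < (D : ℝ) + 1 := by positivity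
  set x : ℝ := 1 / ((D : ℝ) + 1) with hx
  have hx0 : 0 < x := by positivity
  have hx1 : x ≤ 1 := by
    rw [hx, div_le_one hD0]; linarith
  -- Step 1 : (k-1)^d ≤ (exp (-1/k) * k)^d
  have h1 : ((k : ℝ) - 1) ^ d ≤ (Real.exp (-(1 : ℝ) / k) * k) ^ d := by
    apply pow_le_pow_left₀ (by linarith)
    have hexp := Real.add_one_le_exp (-(1 : ℝ) / k)
    have heq : ((k : ℝ) - 1) = (-(1 : ℝ) / k + 1) * k := by field_simp; ring
    rw [heq]
    exact mul_le_mul_of_nonneg_right hexp (le_of_lt hk0)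
  -- Step 2 : (exp (-1/k) * k)^d = exp (d * (-1/k)) * k^d
  have h2 : (Real.exp (-(1 : ℝ) / k) * k) ^ d
      = Real.exp ((d : ℝ) * (-(1 : ℝ) / k)) * (k : ℝ) ^ d := by
    rw [mul_pow, Real.exp_nat_mul]
  -- Step 3 : exp (d * (-1/k)) ≤ exp (-(12 * L))
  have h3 : Real.exp ((d : ℝ) * (-(1 : ℝ) / k)) ≤ Real.exp (-(12 * L)) := by
    apply Real.exp_le_exp.mpr
    have hdk : 12 * L ≤ (d : ℝ) / k := by
      rw [le_div_iff₀ hk0]; nlinarith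
    have heq2 : (d : ℝ) * (-1 / k) = -((d : ℝ) / k) := by ring
    rw [heq2]
    linarith
  -- Step 4 : exp (-(12*L)) = (b^12)⁻¹
  have h4 : Real.exp (-(12 * L)) = (b ^ 12)⁻¹ := by
    rw [Real.exp_neg]
    congr 1
    have : (12 : ℝ) * L = ((12 : ℕ) : ℝ) * L := by norm_num
    rw [this, Real.exp_nat_mul, Real.exp_log hb0]
  -- Step 5 : (b^12)⁻¹ ≤ x * x
  have hxx : x * x = (((D : ℝ) + 1) * ((D : ℝ) + 1))⁻¹ := by
    rw [hx]; field_simp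
  have hdtk1 : (1 : ℝ) ≤ (d : ℝ) * ((t : ℝ) * k) := by
    have h1' : (1 : ℝ) ≤ (d : ℝ) := by exact_mod_cast hd1
    have h2' : (1 : ℝ) ≤ (t : ℝ) * k := by
      calc (1 : ℝ) = 1 * 1 := by norm_num
        _ ≤ (t : ℝ) * k := mul_le_mul htR (by linarith) (by norm_num) (by linarith)
    calc (1 : ℝ) = 1 * 1 := by norm_num
      _ ≤ (d : ℝ) * ((t : ℝ) * k) := mul_le_mul h1' h2' (by norm_num) (by linarith)
  have hD26 : (D : ℝ) + 1 ≤ 26 * b ^ 3 := by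
    have htk0 : (0 : ℝ) ≤ (t : ℝ) * k := by positivity
    have hdL : (d : ℝ) * ((t : ℝ) * k) ≤ (13 * k * L) * ((t : ℝ) * k) :=
      mul_le_mul_of_nonneg_right hd_le htk0
    have h1' : (k : ℝ) * ((t : ℝ) * k) ≤ b * b :=
      mul_le_mul hkb htkb htk0 (by linarith)
    have h2' : (k : ℝ) * ((t : ℝ) * k) * L ≤ (b * b) * b :=
      mul_le_mul h1' hLb (le_of_lt hL0) (by positivity)
    calc (D : ℝ) + 1 = (d : ℝ) * ((t : ℝ) * k) + 1 := by rw [hDR]; ring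
      _ ≤ (d : ℝ) * ((t : ℝ) * k) + (d : ℝ) * ((t : ℝ) * k) := by
          linarith [hdtk1]
      _ = 2 * ((d : ℝ) * ((t : ℝ) * k)) := by ring
      _ ≤ 2 * ((13 * k * L) * ((t : ℝ) * k)) := by linarith
      _ = 26 * ((k : ℝ) * ((t : ℝ) * k) * L) := by ring
      _ ≤ 26 * ((b * b) * b) := by linarith
      _ = 26 * b ^ 3 := by ring
  have h5 : (b ^ 12)⁻¹ ≤ x * x := by
    rw [hxx]
    apply inv_anti₀ (by positivity)
    calc ((D : ℝ) + 1) * ((D : ℝ) + 1) ≤ (26 * b ^ 3) * (26 * b ^ 3) :=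
          mul_le_mul hD26 hD26 (le_of_lt hD0) (by positivity)
      _ = 676 * b ^ 6 := by ring
      _ ≤ b ^ 6 * b ^ 6 := by
          apply mul_le_mul_of_nonneg_right _ (by positivity)
          calc (676 : ℝ) ≤ 4 ^ 6 := by norm_num
            _ ≤ b ^ 6 := pow_le_pow_left₀ (by norm_num) hb4 6
      _ = b ^ 12 := by ring
  -- Step 6 : x * x ≤ x * (1-x)^D
  have h6 : x * x ≤ x * (1 - x) ^ D := by
    apply mul_le_mul_of_nonneg_left _ (le_of_lt hx0)
    have hber := one_add_mul_le_pow (a := -x) (by linarith) D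
    have : 1 + (D : ℝ) * (-x) = x := by
      rw [hx]; field_simp; ring
    calc x = 1 + (D : ℝ) * (-x) := this.symm
      _ ≤ (1 + -x) ^ D := hber
      _ = (1 - x) ^ D := by ring_nf
  -- Combine
  have hkd : (0 : ℝ) ≤ (k : ℝ) ^ d := by positivity
  calc ((k : ℝ) - 1) ^ d ≤ Real.exp ((d : ℝ) * (-(1 : ℝ) / k)) * (k : ℝ) ^ d := by
        rw [← h2]; exact h1
    _ ≤ Real.exp (-(12 * L)) * (k : ℝ) ^ d := mul_le_mul_of_nonneg_right h3 hkd
    _ = (b ^ 12)⁻¹ * (k : ℝ) ^ d := by rw [h4]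
    _ ≤ (x * x) * (k : ℝ) ^ d := mul_le_mul_of_nonneg_right h5 hkd
    _ ≤ (x * (1 - x) ^ D) * (k : ℝ) ^ d := mul_le_mul_of_nonneg_right h6 hkd
    _ = (1 / (D + 1)) * (1 - 1 / (D + 1)) ^ D * (k : ℝ) ^ d := by rw [hx]

/-- The bad event: all of `q.1` avoids color `q.2`. -/
def Ev {n k : ℕ} (T : Finset (Finset (Fin n))) (q : {e : Finset (Fin n) // e ∈ T} × Fin k) :
    Finset (Fin n → Fin k) :=
  Finset.univ.filter (fun χ : Fin n → Fin k => ∀ v ∈ (q.1 : Finset (Fin n)), χ v ≠ q.2)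

lemma mem_Ev {n k : ℕ} {T : Finset (Finset (Fin n))} {q : {e : Finset (Fin n) // e ∈ T} × Fin k}
    {χ : Fin n → Fin k} : χ ∈ Ev T q ↔ ∀ v ∈ (q.1 : Finset (Fin n)), χ v ≠ q.2 := by
  simp [Ev]

/-- The neighbourhood of an event: all events whose vertex set meets that of `q`. -/
noncomputable def Nb {n k : ℕ} (T : Finset (Finset (Fin n)))
    (q : {e : Finset (Fin n) // e ∈ T} × Fin k) :
    Finset ({e : Finset (Fin n) // e ∈ T} × Fin k) :=
  @Finset.filter _
    (fun r => ¬ Disjoint (r.1 : Finset (Fin n)) (q.1 : Finset (Fin n)))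
    (Classical.decPred _) Finset.univ

lemma mem_Nb {n k : ℕ} {T : Finset (Finset (Fin n))}
    {q r : {e : Finset (Fin n) // e ∈ T} × Fin k} :
    r ∈ Nb T q ↔ ¬ Disjoint (r.1 : Finset (Fin n)) (q.1 : Finset (Fin n)) := by
  simp [Nb]

/-- there is a universal constant `C > 0` such that any `t`-sparse family
of coverage functions (with `k ≥ 2`, `t ≥ 1`) all of whose sets have size at least
`C · k · ln(tk + 2)` admits a `k`-coloring of discrepancy `0`. -/
theorem sparse_coverage_big_sets_zero_discrepancy :
    ∃ C : ℝ, 0 < C ∧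
      ∀ (n m t k : ℕ) (S : Fin m → Multiset (Finset (Fin n))),
        2 ≤ k → 1 ≤ t →
        (∀ j : Fin n, (∑ i, ((S i).filter (fun s' => j ∈ s')).card) ≤ t) →
        (∀ i : Fin m, ∀ s' ∈ S i, C * k * Real.log ((t : ℝ) * k + 2) ≤ (s'.card : ℝ)) →
        ∃ χ : Fin n → Fin k, ∀ (i : Fin m) (ℓ ℓ' : Fin k),
          cov (S i) (colorClass χ ℓ) = cov (S i) (colorClass χ ℓ') := by
  classical
  refine ⟨12, by norm_num, ?_⟩
  intro n m t k S hk ht hsparse hsize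
  set b : ℝ := (t : ℝ) * k + 2 with hb
  set L : ℝ := Real.log b with hLdef
  have htR : (1 : ℝ) ≤ t := by exact_mod_cast ht
  have hkR : (2 : ℝ) ≤ k := by exact_mod_cast hk
  have hk0 : (0 : ℝ) < k := by linarith
  have hb4 : (4 : ℝ) ≤ b := by nlinarith
  have hb0 : (0 : ℝ) < b := by linarith
  have hL1 : (1 : ℝ) ≤ L := by
    rw [hLdef, Real.le_log_iff_exp_le hb0]
    calc Real.exp 1 ≤ 2.7182818286 := le_of_lt Real.exp_one_lt_d9
      _ ≤ 4 := by norm_num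
      _ ≤ b := hb4
  have hkL1 : (1 : ℝ) ≤ (k : ℝ) * L := by nlinarith
  obtain ⟨d, hdef⟩ : ∃ d : ℕ, d = ⌈(12 : ℝ) * k * L⌉₊ := ⟨_, rfl⟩
  have hd_ge : 12 * (k : ℝ) * L ≤ d := by rw [hdef]; exact Nat.le_ceil _
  have hdlt : (d : ℝ) < 12 * k * L + 1 := by
    rw [hdef]; exact Nat.ceil_lt_add_one (by nlinarith)
  have hd_le : (d : ℝ) ≤ 13 * k * L := by nlinarith
  have hd1 : 1 ≤ d := by
    rw [hdef]; exact Nat.ceil_pos.mpr (by nlinarith)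
  set Dk : ℕ := d * t * k with hDk
  have hDk1 : 1 ≤ Dk := by
    rw [hDk]
    calc 1 = 1 * 1 * 1 := by norm_num
      _ ≤ d * t * k := Nat.mul_le_mul (Nat.mul_le_mul hd1 ht) (by omega)
  have hx0 : (0 : ℝ) < 1 / ((Dk : ℝ) + 1) := by positivity
  have hx1 : 1 / ((Dk : ℝ) + 1) < 1 := by
    rw [div_lt_one (by positivity)]
    have : (1 : ℝ) ≤ (Dk : ℝ) := by exact_mod_cast hDk1
    linarith
  -- truncation of each set to size exactly d
  have truncspec : ∀ s : Finset (Fin n),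
      ∃ e : Finset (Fin n), e ⊆ s ∧ (d ≤ s.card → e.card = d) := by
    intro s
    by_cases h : d ≤ s.card
    · obtain ⟨e, he, hc⟩ := Finset.exists_subset_card_eq h
      exact ⟨e, he, fun _ => hc⟩
    · exact ⟨s, Finset.Subset.refl s, fun h' => absurd h' h⟩
  choose trunc htruncsub htrunccard using truncspec
  set T : Finset (Finset (Fin n)) :=
    Finset.univ.filter
      (fun e => e.card = d ∧ ∃ i : Fin m, ∃ s ∈ S i, trunc s = e) with hT
  have hTcard : ∀ e ∈ T, e.card = d := by
    intro e he
    rw [hT, Finset.mem_filter] at he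
    exact he.2.1
  haveI : Nonempty (Fin k) := ⟨⟨0, by omega⟩⟩
  haveI : Nonempty (Fin n → Fin k) := ⟨fun _ => Classical.arbitrary _⟩
  -- per-vertex counting bound
  have hTv : ∀ v : Fin n, (T.filter (fun e => v ∈ e)).card ≤ t := by
    intro v
    have hsub3 : T.filter (fun e => v ∈ e) ⊆
        Finset.univ.biUnion (fun i : Fin m =>
          (((S i).filter (fun s => v ∈ s)).toFinset.image trunc)) := by
      intro e he
      rw [Finset.mem_filter] at he
      obtain ⟨heT, hev⟩ := he
      rw [hT, Finset.mem_filter] at heT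
      obtain ⟨-, -, i, s, hs, hts⟩ := heT
      have hvs : v ∈ s := htruncsub s (by rw [hts]; exact hev)
      refine Finset.mem_biUnion.mpr ⟨i, Finset.mem_univ i, ?_⟩
      rw [Finset.mem_image]
      exact ⟨s, Multiset.mem_toFinset.mpr (Multiset.mem_filter.mpr ⟨hs, hvs⟩), hts⟩
    calc (T.filter (fun e => v ∈ e)).card
        ≤ (Finset.univ.biUnion (fun i : Fin m =>
            (((S i).filter (fun s => v ∈ s)).toFinset.image trunc))).card :=
          Finset.card_le_card hsub3
      _ ≤ ∑ i : Fin m, ((((S i).filter (fun s => v ∈ s)).toFinset.image trunc)).card :=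
          Finset.card_biUnion_le
      _ ≤ ∑ i : Fin m, Multiset.card ((S i).filter (fun s => v ∈ s)) := by
          apply Finset.sum_le_sum
          intro i _
          exact le_trans Finset.card_image_le (Multiset.toFinset_card_le _)
      _ ≤ t := hsparse v
  have hv : ∀ v : Fin n,
      (Finset.univ.filter
        (fun r : {e : Finset (Fin n) // e ∈ T} × Fin k =>
          v ∈ (r.1 : Finset (Fin n)))).card ≤ t * k := by
    intro v
    have hsplit : Finset.univ.filter
        (fun r : {e : Finset (Fin n) // e ∈ T} × Fin k => v ∈ (r.1 : Finset (Fin n)))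
        = (Finset.univ.filter
            (fun f : {e : Finset (Fin n) // e ∈ T} => v ∈ (f : Finset (Fin n))))
          ×ˢ Finset.univ := by
      ext r
      simp [Finset.mem_product]
    rw [hsplit, Finset.card_product, Finset.card_univ, Fintype.card_fin]
    apply Nat.mul_le_mul_right
    calc (Finset.univ.filter
            (fun f : {e : Finset (Fin n) // e ∈ T} => v ∈ (f : Finset (Fin n)))).card
        ≤ (T.filter (fun e => v ∈ e)).card := by
          refine Finset.card_le_card_of_injOn
            (fun f : {e : Finset (Fin n) // e ∈ T} => (f : Finset (Fin n))) ?_ ?_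
          · intro f hf
            rw [Finset.mem_coe, Finset.mem_filter] at hf ⊢
            exact ⟨f.2, hf.2⟩
          · intro a _ b _ hab
            exact Subtype.ext hab
      _ ≤ t := hTv v
  -- dependency degree bound
  have hΓ : ∀ q : {e : Finset (Fin n) // e ∈ T} × Fin k,
      ((Nb T q).erase q).card ≤ Dk := by
    intro q
    refine le_trans (Finset.card_le_card (Finset.erase_subset _ _)) ?_
    have hsub : Nb T q
        ⊆ (q.1 : Finset (Fin n)).biUnion
            (fun v => Finset.univ.filter
              (fun r : {e : Finset (Fin n) // e ∈ T} × Fin k =>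
                v ∈ (r.1 : Finset (Fin n)))) := by
      intro r hr
      rw [mem_Nb] at hr
      obtain ⟨v, hv1, hv2⟩ := Finset.not_disjoint_iff.mp hr
      exact Finset.mem_biUnion.mpr
        ⟨v, hv2, Finset.mem_filter.mpr ⟨Finset.mem_univ _, hv1⟩⟩
    refine le_trans (Finset.card_le_card hsub) ?_
    refine le_trans Finset.card_biUnion_le ?_
    calc ∑ v ∈ (q.1 : Finset (Fin n)),
          (Finset.univ.filter
            (fun r : {e : Finset (Fin n) // e ∈ T} × Fin k =>
              v ∈ (r.1 : Finset (Fin n)))).card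
        ≤ ∑ _v ∈ (q.1 : Finset (Fin n)), t * k :=
          Finset.sum_le_sum (fun v _ => hv v)
      _ = d * (t * k) := by
          rw [Finset.sum_const, hTcard q.1.1 q.1.2, smul_eq_mul]
      _ = Dk := by rw [hDk]; exact (Nat.mul_assoc d t k).symm
  -- probability bound
  have hp : ∀ q : {e : Finset (Fin n) // e ∈ T} × Fin k,
      ((Ev T q).card : ℝ)
        ≤ (1 / ((Dk : ℝ) + 1)) * (1 - 1 / ((Dk : ℝ) + 1)) ^ Dk
            * Fintype.card (Fin n → Fin k) := by
    intro q
    have hecard : (q.1 : Finset (Fin n)).card = d := hTcard q.1.1 q.1.2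
    have hdn : d ≤ n := by
      rw [← hecard]
      calc (q.1 : Finset (Fin n)).card ≤ (Finset.univ : Finset (Fin n)).card :=
            Finset.card_le_univ _
        _ = n := by rw [Finset.card_univ, Fintype.card_fin]
    have hEv : Ev T q = Finset.univ.filter
        (fun χ : Fin n → Fin k => ∀ v ∈ (q.1 : Finset (Fin n)), χ v ≠ q.2) := by
      ext χ; simp [Ev]
    rw [hEv, card_avoid, Fintype.card_fun, Fintype.card_fin, Fintype.card_fin,
      hecard, Nat.cast_pow]
    have hkey := numeric_key t k d Dk ht hk hd1 hd_ge hd_le hDk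
    have hcast : (((k - 1) ^ d * k ^ (n - d) : ℕ) : ℝ)
        = ((k : ℝ) - 1) ^ d * (k : ℝ) ^ (n - d) := by
      push_cast [Nat.cast_sub (by omega : 1 ≤ k)]
      ring
    rw [hcast]
    calc ((k : ℝ) - 1) ^ d * (k : ℝ) ^ (n - d)
        ≤ ((1 / ((Dk : ℝ) + 1)) * (1 - 1 / ((Dk : ℝ) + 1)) ^ Dk * (k : ℝ) ^ d)
            * (k : ℝ) ^ (n - d) := by
          apply mul_le_mul_of_nonneg_right hkey (by positivity)
      _ = (1 / ((Dk : ℝ) + 1)) * (1 - 1 / ((Dk : ℝ) + 1)) ^ Dk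
            * ((k : ℝ) ^ d * (k : ℝ) ^ (n - d)) := by ring
      _ = (1 / ((Dk : ℝ) + 1)) * (1 - 1 / ((Dk : ℝ) + 1)) ^ Dk * (k : ℝ) ^ n := by
          rw [← pow_add, Nat.add_sub_cancel' hdn]
  -- independence
  have hind : ∀ (q : {e : Finset (Fin n) // e ∈ T} × Fin k)
      (S' : Finset ({e : Finset (Fin n) // e ∈ T} × Fin k)),
      Disjoint S' (Nb T q) →
      ((Ev T q ∩ Abar (Ev T) S').card : ℝ) * Fintype.card (Fin n → Fin k)
        = ((Ev T q).card : ℝ) * ((Abar (Ev T) S').card : ℝ) := by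
    intro q S' hdisj
    have hres := indep_card (q.1 : Finset (Fin n)) (Ev T q) (Abar (Ev T) S') ?_ ?_
    · exact_mod_cast hres
    · intro χ ψ hagree
      rw [mem_Ev, mem_Ev]
      constructor <;> intro h v hv
      · rw [← hagree v hv]; exact h v hv
      · rw [hagree v hv]; exact h v hv
    · intro χ ψ hagree
      rw [mem_Abar, mem_Abar]
      have hjA : ∀ j ∈ S', (χ ∈ Ev T j ↔ ψ ∈ Ev T j) := by
        intro j hj
        have hjn : j ∉ Nb T q := Finset.disjoint_left.mp hdisj hj
        have hdis : Disjoint (j.1 : Finset (Fin n)) (q.1 : Finset (Fin n)) := by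
          by_contra hcon
          exact hjn (mem_Nb.mpr hcon)
        rw [mem_Ev, mem_Ev]
        constructor <;> intro h v hv
        · rw [← hagree v (Finset.disjoint_left.mp hdis hv)]
          exact h v hv
        · rw [hagree v (Finset.disjoint_left.mp hdis hv)]
          exact h v hv
      constructor <;> intro h j hj
      · exact fun hmem => h j hj ((hjA j hj).mpr hmem)
      · exact fun hmem => h j hj ((hjA j hj).mp hmem)
  obtain ⟨χ, hχ⟩ := lll_nonempty (Ev T) (Nb T) Dk (1 / ((Dk : ℝ) + 1)) hx0 hx1 hp hΓ hind
  -- every original set is rainbow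
  have hrainbow : ∀ (i : Fin m), ∀ s ∈ S i, ∀ ℓ₀ : Fin k, ∃ v ∈ s, χ v = ℓ₀ := by
    intro i s hs ℓ₀
    have hdcard : d ≤ s.card := by
      rw [hdef]
      exact Nat.ceil_le.mpr (hsize i s hs)
    have heT : trunc s ∈ T := by
      rw [hT, Finset.mem_filter]
      exact ⟨Finset.mem_univ _, htrunccard s hdcard, ⟨i, s, hs, rfl⟩⟩
    have h' : ¬ ∀ v ∈ trunc s, χ v ≠ ℓ₀ := by
      intro hall
      exact hχ (⟨⟨trunc s, heT⟩, ℓ₀⟩) (mem_Ev.mpr hall)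
    push_neg at h'
    obtain ⟨v, hv1, hv2⟩ := h'
    exact ⟨v, htruncsub s hv1, hv2⟩
  refine ⟨χ, ?_⟩
  have hkey : ∀ (i : Fin m) (ℓ₀ : Fin k),
      cov (S i) (colorClass χ ℓ₀) = ((S i).card : ℝ) := by
    intro i ℓ₀
    have hmap : Multiset.map
        (fun s => min (((s ∩ colorClass χ ℓ₀).card : ℝ)) 1) (S i)
        = Multiset.map (fun _ => (1 : ℝ)) (S i) := by
      apply Multiset.map_congr rfl
      intro s hs
      obtain ⟨v, hvs, hvχ⟩ := hrainbow i s hs ℓ₀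
      have hvmem : v ∈ s ∩ colorClass χ ℓ₀ := by
        rw [Finset.mem_inter]
        refine ⟨hvs, ?_⟩
        rw [colorClass, Finset.mem_filter]
        exact ⟨Finset.mem_univ _, hvχ⟩
      have h1le : (1 : ℝ) ≤ ((s ∩ colorClass χ ℓ₀).card : ℝ) := by
        exact_mod_cast Finset.card_pos.mpr ⟨v, hvmem⟩
      exact min_eq_right h1le
    calc cov (S i) (colorClass χ ℓ₀)
        = (Multiset.map (fun _ => (1 : ℝ)) (S i)).sum := by
          rw [cov, hmap]
      _ = ((S i).card : ℝ) := by
          simp [Multiset.map_const', Multiset.sum_replicate]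
  intro i ℓ ℓ'
  rw [hkey i ℓ, hkey i ℓ']
end

section
/- Let f : 2^{[n]} → ℝ be a coverage function determined by a collection S of finite subsets of [n], i.e. f(T) = Σ_{S ∈ S} min(|S ∩ T|, 1), and let F : [0,1]^n → ℝ be its multilinear extension. Fix a point x ∈ [0,1]^n and a set D ⊆ [n] such that |S ∩ D| ≤ 1 for every S ∈ S. Then the restricted function F|_D : [0,1]^D → ℝ, obtained from F by fixing the coordinates outside D to the values of x and viewing F as a function of the coordinates in D, is an affine function (i.e., it equals a constant plus a linear function of the coordinates indexed by D). -/
open Finset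

/-- Multilinear extension of a set function `f : 2^{[n]} → ℝ`. -/
noncomputable def mlext {n : ℕ} (f : Finset (Fin n) → ℝ) (x : Fin n → ℝ) : ℝ :=
  ∑ T : Finset (Fin n), f T * (∏ i ∈ T, x i) * (∏ j ∈ Tᶜ, (1 - x j))

lemma sum_prob {n : ℕ} (x : Fin n → ℝ) (u : Finset (Fin n)) :
    ∑ T ∈ u.powerset, (∏ i ∈ T, x i) * ∏ j ∈ u \ T, (1 - x j) = 1 := by
  have h := Finset.prod_add x (fun i => 1 - x i) u
  simp only [add_sub_cancel, Finset.prod_const_one] at h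
  simpa using h.symm

lemma sum_prob_univ {n : ℕ} (x : Fin n → ℝ) :
    ∑ T : Finset (Fin n), (∏ i ∈ T, x i) * ∏ j ∈ Tᶜ, (1 - x j) = 1 := by
  have h := sum_prob x (Finset.univ : Finset (Fin n))
  rw [Finset.powerset_univ] at h
  simpa [Finset.compl_eq_univ_sdiff] using h

lemma sum_prob_disjoint {n : ℕ} (x : Fin n → ℝ) (s : Finset (Fin n)) :
    ∑ T : Finset (Fin n), (if s ∩ T = ∅ then (1:ℝ) else 0) * ((∏ i ∈ T, x i) * ∏ j ∈ Tᶜ, (1 - x j))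
      = ∏ i ∈ s, (1 - x i) := by
  simp only [ite_mul, one_mul, zero_mul]
  rw [← Finset.sum_filter]
  have hfil : (Finset.univ.filter (fun T : Finset (Fin n) => s ∩ T = ∅)) = sᶜ.powerset := by
    ext T
    simp [Finset.mem_powerset, Finset.subset_compl_comm, ← Finset.disjoint_iff_inter_eq_empty,
      le_compl_iff_disjoint_right]
    exact disjoint_comm
  rw [hfil]
  have key : ∀ T ∈ sᶜ.powerset, (∏ i ∈ T, x i) * ∏ j ∈ Tᶜ, (1 - x j)
      = (∏ i ∈ s, (1 - x i)) * ((∏ i ∈ T, x i) * ∏ j ∈ sᶜ \ T, (1 - x j)) := by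
    intro T hT
    rw [Finset.mem_powerset] at hT
    have hTc : Tᶜ = s ∪ (sᶜ \ T) := by
      ext i
      by_cases hi : i ∈ s <;> simp [hi]
      · exact fun h => absurd (hT h) (by simpa using hi)
    rw [hTc, Finset.prod_union (disjoint_compl_right.mono_right Finset.sdiff_subset)]
    ring
  rw [Finset.sum_congr rfl key, ← Finset.mul_sum, sum_prob x sᶜ, mul_one]

lemma min_card_eq {n : ℕ} (s T : Finset (Fin n)) :
    min ((s ∩ T).card : ℝ) 1 = 1 - (if s ∩ T = ∅ then (1:ℝ) else 0) := by
  by_cases h : s ∩ T = ∅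
  · simp [h]
  · have h1 : (1:ℝ) ≤ ((s ∩ T).card : ℝ) := by
      exact_mod_cast Finset.card_pos.mpr (Finset.nonempty_iff_ne_empty.mpr h)
    simp [h, min_eq_right h1]

lemma mlext_single {n : ℕ} (s : Finset (Fin n)) (y : Fin n → ℝ) :
    mlext (fun T => min ((s ∩ T).card : ℝ) 1) y = 1 - ∏ i ∈ s, (1 - y i) := by
  unfold mlext
  simp only [min_card_eq, sub_mul, mul_assoc, one_mul]
  rw [Finset.sum_sub_distrib, sum_prob_univ, sum_prob_disjoint]

lemma mlext_cov {n : ℕ} (𝒮 : Multiset (Finset (Fin n))) (y : Fin n → ℝ) :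
    mlext (cov 𝒮) y = (𝒮.map (fun s => 1 - ∏ i ∈ s, (1 - y i))).sum := by
  induction 𝒮 using Multiset.induction with
  | empty => simp [mlext, cov]
  | cons s 𝒮 ih =>
    have : mlext (cov (s ::ₘ 𝒮)) y
        = mlext (fun T => min ((s ∩ T).card : ℝ) 1) y + mlext (cov 𝒮) y := by
      unfold mlext cov
      rw [← Finset.sum_add_distrib]
      refine Finset.sum_congr rfl fun T _ => ?_
      simp [add_mul]
    rw [this, mlext_single, ih, Multiset.map_cons, Multiset.sum_cons]

lemma per_s {n : ℕ} (D s : Finset (Fin n)) (hs : (s ∩ D).card ≤ 1)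
    (x y : Fin n → ℝ) (hy : ∀ j ∉ D, y j = x j) :
    1 - ∏ i ∈ s, (1 - y i)
      = (1 - ∏ i ∈ s \ D, (1 - x i))
        + ∑ j ∈ D, (if j ∈ s then ∏ i ∈ s \ D, (1 - x i) else 0) * y j := by
  have hsplit : (∏ i ∈ s ∩ D, (1 - y i)) * ∏ i ∈ s \ D, (1 - y i) = ∏ i ∈ s, (1 - y i) :=
    Finset.prod_inter_mul_prod_diff s D _
  have hxy : ∏ i ∈ s \ D, (1 - y i) = ∏ i ∈ s \ D, (1 - x i) :=
    Finset.prod_congr rfl fun i hi => by rw [hy i (Finset.mem_sdiff.mp hi).2]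
  have hsum : ∑ j ∈ D, (if j ∈ s then ∏ i ∈ s \ D, (1 - x i) else 0) * y j
      = ∑ j ∈ s ∩ D, (∏ i ∈ s \ D, (1 - x i)) * y j := by
    simp only [ite_mul, zero_mul]
    rw [← Finset.sum_filter]
    congr 1
    ext j
    simp [Finset.mem_inter, and_comm]
  rw [hsum, ← hxy]
  interval_cases h : (s ∩ D).card
  · have he : s ∩ D = ∅ := Finset.card_eq_zero.mp h
    have hsd : s \ D = s := by
      rw [Finset.sdiff_eq_self_iff_disjoint, Finset.disjoint_iff_inter_eq_empty, he]
    rw [he, hsd]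
    simp
  · obtain ⟨j0, hj0⟩ := Finset.card_eq_one.mp h
    rw [hj0] at hsplit ⊢
    simp only [Finset.prod_singleton, Finset.sum_singleton] at hsplit ⊢
    rw [← hsplit]
    ring

lemma multiset_sum_map_finset_sum {α β : Type*} (m : Multiset α) (D : Finset β)
    (g : α → β → ℝ) :
    (m.map (fun s => ∑ j ∈ D, g s j)).sum = ∑ j ∈ D, (m.map (fun s => g s j)).sum := by
  induction m using Multiset.induction with
  | empty => simp
  | cons s m ih => simp [ih, Finset.sum_add_distrib]

/-- if `|S ∩ D| ≤ 1` for every `S` in the collection determining the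
coverage function `f`, then the multilinear extension of `f` restricted to the
coordinates in `D` (fixing the others to the values of `x`) is affine. -/
theorem restricted_multilinear_extension_is_affine
    (n : ℕ) (𝒮 : Multiset (Finset (Fin n)))
    (x : Fin n → ℝ) (hx : ∀ j, x j ∈ Set.Icc (0 : ℝ) 1)
    (D : Finset (Fin n)) (hD : ∀ s ∈ 𝒮, (s ∩ D).card ≤ 1) :
    ∃ (c : ℝ) (a : Fin n → ℝ), ∀ y : Fin n → ℝ,
      (∀ j, y j ∈ Set.Icc (0 : ℝ) 1) → (∀ j ∉ D, y j = x j) →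
      mlext (cov 𝒮) y = c + ∑ j ∈ D, a j * y j := by
  refine ⟨(𝒮.map (fun s => 1 - ∏ i ∈ s \ D, (1 - x i))).sum,
    fun j => (𝒮.map (fun s => if j ∈ s then ∏ i ∈ s \ D, (1 - x i) else 0)).sum,
    fun y _ hy => ?_⟩
  rw [mlext_cov]
  have step : (𝒮.map (fun s => 1 - ∏ i ∈ s, (1 - y i))).sum
      = (𝒮.map (fun s => (1 - ∏ i ∈ s \ D, (1 - x i))
          + ∑ j ∈ D, (if j ∈ s then ∏ i ∈ s \ D, (1 - x i) else 0) * y j)).sum := by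
    congr 1
    exact Multiset.map_congr rfl fun s hs => per_s D s (hD s hs) x y hy
  rw [step, Multiset.sum_map_add]
  congr 1
  rw [multiset_sum_map_finset_sum]
  refine Finset.sum_congr rfl fun j _ => ?_
  rw [← Multiset.sum_map_mul_right]
end

section
/- Let A ∈ ℝ^{m×n}, b ∈ ℝ^m, and x ∈ [0,1]^n with Ax = b. Then there exists a finitely supported probability distribution on [0,1]^n (i.e., finitely many points y^{(1)}, …, y^{(N)} ∈ [0,1]^n with nonnegative weights λ_1, …, λ_N summing to 1) such that: (i) Σ_r λ_r y^{(r)} = x; (ii) A y^{(r)} = b for every r; and (iii) every y^{(r)} has at most m coordinates lying strictly between 0 and 1. -/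
open Finset Matrix

/-!
If a point `x` of the polytope `{y ∈ [0,1]^n : Ay = b}` has more than `m` fractional
coordinates, the corresponding columns of `A` are linearly dependent, so some `d ≠ 0` with
`Ad = 0` is supported on them. Moving from `x` along `d` and along `-d` until a coordinate
reaches `0` or `1` gives two points of the polytope with fewer fractional coordinates and `x` on
the segment between them. Induction on the number of fractional coordinates then puts `x` in the
convex hull of the points of the polytope with at most `m` fractional coordinates.
-/

noncomputable def exitTime (a c : ℝ) : ℝ := if 0 < c then (1 - a) / c else -a / c

lemma exitTime_pos {a c : ℝ} (ha : a ∈ Set.Ioo 0 1) (hc : c ≠ 0) : 0 < exitTime a c := by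
  unfold exitTime
  split_ifs with h
  · exact div_pos (by linarith [ha.2]) h
  · exact div_pos_of_neg_of_neg (by linarith [ha.1]) (lt_of_le_of_ne (not_lt.1 h) hc)

lemma add_exitTime_mul_notMem_Ioo {a c : ℝ} (hc : c ≠ 0) :
    a + exitTime a c * c ∉ Set.Ioo 0 1 := by
  unfold exitTime
  split_ifs <;> simp [div_mul_cancel₀ _ hc]

lemma add_mul_mem_Icc_of_le_exitTime {a c t : ℝ} (ha : a ∈ Set.Icc 0 1) (ht₀ : 0 ≤ t)
    (ht : t ≤ exitTime a c) : a + t * c ∈ Set.Icc 0 1 := by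
  obtain ⟨ha₀, ha₁⟩ := ha
  unfold exitTime at ht
  rcases lt_trichotomy c 0 with hc | rfl | hc
  · rw [if_neg hc.not_gt, le_div_iff_of_neg hc] at ht
    constructor <;> nlinarith
  · simpa using ⟨ha₀, ha₁⟩
  · rw [if_pos hc, le_div_iff₀ hc] at ht
    constructor <;> nlinarith

section Fractional

variable {ι : Type*} [Fintype ι]

noncomputable def fractionalCoords (y : ι → ℝ) : Finset ι :=
  univ.filter fun i => 0 < y i ∧ y i < 1

@[simp]
lemma mem_fractionalCoords {y : ι → ℝ} {i : ι} :
    i ∈ fractionalCoords y ↔ y i ∈ Set.Ioo 0 1 := by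
  simp [fractionalCoords]

lemma exists_pos_card_fractionalCoords_add_smul_lt {x d : ι → ℝ}
    (hx : ∀ i, x i ∈ Set.Icc 0 1) (hd : d ≠ 0)
    (hsupp : ∀ i, d i ≠ 0 → x i ∈ Set.Ioo 0 1) :
    ∃ t : ℝ, 0 < t ∧ (∀ i, (x + t • d) i ∈ Set.Icc 0 1) ∧
      #(fractionalCoords (x + t • d)) < #(fractionalCoords x) := by
  set S := univ.filter fun i => d i ≠ 0
  have hmemS {i : ι} : i ∈ S ↔ d i ≠ 0 := by simp [S]
  have hS : S.Nonempty := by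
    obtain ⟨i, hi⟩ := Function.ne_iff.mp hd
    exact ⟨i, hmemS.2 hi⟩
  obtain ⟨i₀, hi₀, ht⟩ := S.exists_mem_eq_inf' hS fun i => exitTime (x i) (d i)
  set t := S.inf' hS fun i => exitTime (x i) (d i)
  have hpos : 0 < t :=
    (lt_inf'_iff _).2 fun i hi => exitTime_pos (hsupp i (hmemS.1 hi)) (hmemS.1 hi)
  have hbox (i : ι) : (x + t • d) i ∈ Set.Icc 0 1 := by
    by_cases hi : d i = 0
    · simpa [hi] using hx i
    · exact add_mul_mem_Icc_of_le_exitTime (hx i) hpos.le (inf'_le _ (hmemS.2 hi))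
  refine ⟨t, hpos, hbox, card_lt_card <| (ssubset_iff_of_subset fun i hi => ?_).2
    ⟨i₀, mem_fractionalCoords.2 (hsupp i₀ (hmemS.1 hi₀)), ?_⟩⟩
  · by_cases hdi : d i = 0
    · simpa [hdi] using hi
    · exact mem_fractionalCoords.2 (hsupp i hdi)
  · simpa [ht] using add_exitTime_mul_notMem_Ioo (a := x i₀) (hmemS.1 hi₀)

end Fractional

lemma exists_ne_zero_mulVec_eq_zero_of_card_lt {K m ι : Type*} [Field K] [Fintype m]
    [Fintype ι] (A : Matrix m ι K) (S : Finset ι) (h : Fintype.card m < #S) :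
    ∃ d : ι → K, d ≠ 0 ∧ (∀ i, d i ≠ 0 → i ∈ S) ∧ A *ᵥ d = 0 := by
  set E := Function.ExtendByZero.linearMap K ((↑) : S → ι)
  have hker : LinearMap.ker (A.mulVecLin ∘ₗ E) ≠ ⊥ :=
    LinearMap.ker_ne_bot_of_finrank_lt (by simpa using h)
  obtain ⟨c, hc, hc0⟩ := (Submodule.ne_bot_iff _).1 hker
  refine ⟨E c, fun h0 => hc0 ?_, fun i hi => ?_, hc⟩
  · exact Function.extend_injective Subtype.val_injective (0 : ι → K)
      (h0.trans (map_zero E).symm)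
  · by_contra hiS
    exact hi (Function.extend_apply' _ _ _ fun ⟨j, hj⟩ => hiS (hj ▸ j.2))

section Polytope

variable {m ι : Type*} [Fintype m] [Fintype ι]

def unitBoxPolytope (A : Matrix m ι ℝ) (b : m → ℝ) : Set (ι → ℝ) :=
  {y | (∀ i, y i ∈ Set.Icc 0 1) ∧ A *ᵥ y = b}

lemma exists_mem_segment_card_fractionalCoords_lt {A : Matrix m ι ℝ} {b : m → ℝ}
    {x : ι → ℝ} (hx : x ∈ unitBoxPolytope A b)
    (hm : Fintype.card m < #(fractionalCoords x)) :
    ∃ y ∈ unitBoxPolytope A b, ∃ z ∈ unitBoxPolytope A b,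
      #(fractionalCoords y) < #(fractionalCoords x) ∧
      #(fractionalCoords z) < #(fractionalCoords x) ∧ x ∈ segment ℝ y z := by
  obtain ⟨d, hd₀, hdS, hAd⟩ := exists_ne_zero_mulVec_eq_zero_of_card_lt A _ hm
  have hsupp (i : ι) (hi : d i ≠ 0) : x i ∈ Set.Ioo 0 1 := mem_fractionalCoords.1 (hdS i hi)
  obtain ⟨s, hs, hsbox, hslt⟩ := exists_pos_card_fractionalCoords_add_smul_lt hx.1 hd₀ hsupp
  obtain ⟨t, ht, htbox, htlt⟩ := exists_pos_card_fractionalCoords_add_smul_lt hx.1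
    (neg_ne_zero.2 hd₀) (by simpa using hsupp)
  refine ⟨x + s • d, ⟨hsbox, ?_⟩, x + t • -d, ⟨htbox, ?_⟩, hslt, htlt,
    t / (s + t), s / (s + t), by positivity, by positivity, by field_simp; ring, ?_⟩
  · simp [mulVec_add, mulVec_smul, hAd, hx.2]
  · simp [mulVec_add, mulVec_smul, mulVec_neg, hAd, hx.2]
  · match_scalars <;> field_simp <;> ring

lemma mem_convexHull_card_fractionalCoords_le {A : Matrix m ι ℝ} {b : m → ℝ} {x : ι → ℝ}
    (hx : x ∈ unitBoxPolytope A b) :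
    x ∈ convexHull ℝ
      {y ∈ unitBoxPolytope A b | #(fractionalCoords y) ≤ Fintype.card m} := by
  induction hk : #(fractionalCoords x) using Nat.strong_induction_on generalizing x with
  | _ k ih =>
    by_cases hm : #(fractionalCoords x) ≤ Fintype.card m
    · exact subset_convexHull ℝ _ ⟨hx, hm⟩
    obtain ⟨y, hy, z, hz, hyx, hzx, hxyz⟩ :=
      exists_mem_segment_card_fractionalCoords_lt hx (not_le.1 hm)
    exact (convex_convexHull ℝ _).segment_subset (ih _ (hk ▸ hyx) hy rfl)
      (ih _ (hk ▸ hzx) hz rfl) hxyz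

end Polytope

lemma exists_fin_of_mem_convexHull {R E : Type*} [Field R] [LinearOrder R]
    [IsStrictOrderedRing R] [AddCommGroup E] [Module R E] {s : Set E} {x : E}
    (hx : x ∈ convexHull R s) :
    ∃ (N : ℕ) (w : Fin N → R) (z : Fin N → E), (∀ r, 0 ≤ w r) ∧ ∑ r, w r = 1 ∧
      (∀ r, z r ∈ s) ∧ ∑ r, w r • z r = x := by
  obtain ⟨κ, _, w, z, hw₀, hw₁, hz, rfl⟩ := mem_convexHull_iff_exists_fintype.1 hx
  let e := Fintype.equivFin κ
  exact ⟨_, w ∘ e.symm, z ∘ e.symm, fun r => hw₀ _, (e.symm.sum_comp w).trans hw₁,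
    fun r => hz _, e.symm.sum_comp fun i => w i • z i⟩

/-- any point `x` of the polytope `{y ∈ [0,1]^n : Ay = b}` is a convex
combination of points of the polytope each having at most `m` fractional coordinates. -/
theorem rounding_in_expectation
    (m n : ℕ) (A : Matrix (Fin m) (Fin n) ℝ) (b : Fin m → ℝ)
    (x : Fin n → ℝ) (hx : ∀ i, x i ∈ Set.Icc (0 : ℝ) 1) (hAx : A.mulVec x = b) :
    ∃ (N : ℕ) (y : Fin N → Fin n → ℝ) (lam : Fin N → ℝ),
      (∀ r, 0 ≤ lam r) ∧ (∑ r, lam r = 1) ∧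
      (∀ r i, y r i ∈ Set.Icc (0 : ℝ) 1) ∧
      (∀ i, ∑ r, lam r * y r i = x i) ∧
      (∀ r, A.mulVec (y r) = b) ∧
      (∀ r, (Finset.univ.filter (fun i => 0 < y r i ∧ y r i < 1)).card ≤ m) := by
  obtain ⟨N, lam, y, hlam, hsum, hy, hxy⟩ :=
    exists_fin_of_mem_convexHull (mem_convexHull_card_fractionalCoords_le ⟨hx, hAx⟩)
  refine ⟨N, y, lam, hlam, hsum, fun r => (hy r).1.1, fun i => ?_, fun r => (hy r).1.2,
    fun r => (hy r).2.trans_eq (Fintype.card_fin m)⟩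
  simpa using congrFun hxy i
end

section
/- There exists a universal constant C > 0 such that the following holds. Let t, k ∈ ℕ with k ≥ 2, and let S be a collection of subsets of [n] such that every element of [n] lies in at most t sets of S and every S ∈ S has |S| ≥ C · k · ln(tk + 2). Then there exists a k-coloring χ : [n] → [k] such that every S ∈ S is a k-rainbow set with respect to χ. -/
set_option maxHeartbeats 1000000

open Finset

theorem indep_card_s9 {V K : Type*} [Fintype V] [DecidableEq V] [Fintype K] [DecidableEq K]
    (S : Finset V) (A B : Finset (V → K))
    (hA : ∀ ω ω' : V → K, (∀ v ∈ S, ω v = ω' v) → ω ∈ A → ω' ∈ A)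
    (hB : ∀ ω ω' : V → K, (∀ v ∉ S, ω v = ω' v) → ω ∈ B → ω' ∈ B) :
    (A ∩ B).card * Fintype.card (V → K) = A.card * B.card := by
  classical
  have key : ((A ∩ B) ×ˢ (univ : Finset (V → K))).card = (A ×ˢ B).card := by
    apply Finset.card_nbij' (i := fun p => (fun v => if v ∈ S then p.1 v else p.2 v,
        fun v => if v ∈ S then p.2 v else p.1 v))
      (j := fun p => (fun v => if v ∈ S then p.1 v else p.2 v,
        fun v => if v ∈ S then p.2 v else p.1 v))
    · rintro ⟨ω, ω'⟩ hp
      rw [Finset.mem_coe, Finset.mem_product] at hp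
      obtain ⟨h12, -⟩ := hp
      rw [Finset.mem_inter] at h12
      rw [Finset.mem_coe, Finset.mem_product]
      exact ⟨hA ω _ (fun v hv => by simp [hv]) h12.1, hB ω _ (fun v hv => by simp [hv]) h12.2⟩
    · rintro ⟨ω, ω'⟩ hp
      rw [Finset.mem_coe, Finset.mem_product] at hp
      rw [Finset.mem_coe, Finset.mem_product, Finset.mem_inter]
      exact ⟨⟨hA ω _ (fun v hv => by simp [hv]) hp.1, hB ω' _ (fun v hv => by simp [hv]) hp.2⟩,
        Finset.mem_univ _⟩
    · rintro ⟨ω, ω'⟩ _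
      refine Prod.ext ?_ ?_ <;> · ext v; by_cases hv : v ∈ S <;> simp [hv]
    · rintro ⟨ω, ω'⟩ _
      refine Prod.ext ?_ ?_ <;> · ext v; by_cases hv : v ∈ S <;> simp [hv]
  have := key
  rw [Finset.card_product, Finset.card_product, Finset.card_univ] at this
  exact this

theorem LLL {V K : Type*} [Fintype V] [DecidableEq V] [Fintype K] [DecidableEq K]
    [Nonempty K] {ι : Type*} [DecidableEq ι] (I : Finset ι)
    (A : ι → Finset (V → K)) (vbl : ι → Finset V)
    (hdep : ∀ i ∈ I, ∀ ω ω' : V → K, (∀ v ∈ vbl i, ω v = ω' v) → ω ∈ A i → ω' ∈ A i)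
    (x : ι → ℝ) (hx0 : ∀ i ∈ I, 0 ≤ x i) (hx1 : ∀ i ∈ I, x i < 1)
    (hP : ∀ i ∈ I, ((A i).card : ℝ) ≤
      x i * (∏ j ∈ I.filter (fun j => j ≠ i ∧ ¬ Disjoint (vbl i) (vbl j)), (1 - x j)) *
        (Fintype.card (V → K) : ℝ)) :
    ∃ ω : V → K, ∀ i ∈ I, ω ∉ A i := by
  classical
  set Ω : ℝ := (Fintype.card (V → K) : ℝ) with hΩdef
  have hΩpos : 0 < Ω := by
    rw [hΩdef]
    exact_mod_cast (Fintype.card_pos : 0 < Fintype.card (V → K))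
  set CF : Finset ι → Finset (V → K) :=
    fun S => univ.filter (fun ω => ∀ j ∈ S, ω ∉ A j) with hCFdef
  have CF_mem : ∀ (S : Finset ι) (ω : V → K), ω ∈ CF S ↔ ∀ j ∈ S, ω ∉ A j := by
    intro S ω; simp [hCFdef]
  have CF_empty : CF ∅ = univ := by ext ω; simp [CF_mem]
  have CF_insert : ∀ (a : ι) (S : Finset ι), CF (insert a S) = CF S \ A a := by
    intro a S; ext ω
    simp only [CF_mem, Finset.mem_sdiff, Finset.forall_mem_insert]
    tauto
  have CF_anti : ∀ S T : Finset ι, S ⊆ T → CF T ⊆ CF S := by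
    intro S T hST ω hω
    rw [CF_mem] at hω ⊢
    exact fun j hj => hω j (hST hj)
  have card_sdiff_real : ∀ (X : Finset (V → K)) (a : ι),
      ((X \ A a).card : ℝ) = (X.card : ℝ) - ((A a ∩ X).card : ℝ) := by
    intro X a
    have := Finset.card_inter_add_card_sdiff X (A a)
    rw [Finset.inter_comm]
    push_cast [← this]
    ring
  -- main induction
  have P1 : ∀ N : ℕ, ∀ S : Finset ι, S ⊆ I → S.card = N → ∀ i ∈ I, i ∉ S →
      ((A i ∩ CF S).card : ℝ) ≤ x i * ((CF S).card : ℝ) := by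
    intro N
    induction N using Nat.strong_induction_on with
    | _ N IH =>
      intro S hSI hScard i hiI hiS
      set S₁ : Finset ι := S.filter (fun j => ¬ Disjoint (vbl i) (vbl j)) with hS₁def
      set S₂ : Finset ι := S.filter (fun j => Disjoint (vbl i) (vbl j)) with hS₂def
      have hS₁S : S₁ ⊆ S := Finset.filter_subset _ _
      have hS₂S : S₂ ⊆ S := Finset.filter_subset _ _
      have hunion : S₂ ∪ S₁ = S := by
        rw [hS₁def, hS₂def, Finset.filter_union_filter_not_eq]
      -- peel lemma
      have peel : ∀ T : Finset ι, T ⊆ S₁ →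
          (∏ j ∈ T, (1 - x j)) * ((CF S₂).card : ℝ) ≤ ((CF (S₂ ∪ T)).card : ℝ) := by
        intro T
        induction T using Finset.induction_on with
        | empty => intro _; simp
        | @insert a T' haT' IHT =>
          intro hsub
          have haS₁ : a ∈ S₁ := hsub (Finset.mem_insert_self _ _)
          have haS : a ∈ S := hS₁S haS₁
          have haI : a ∈ I := hSI haS
          have hT'sub : T' ⊆ S₁ := fun y hy => hsub (Finset.mem_insert_of_mem hy)
          have haS₂ : a ∉ S₂ := by
            intro h
            rw [hS₂def, Finset.mem_filter] at h
            rw [hS₁def, Finset.mem_filter] at haS₁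
            exact haS₁.2 h.2
          have haU : a ∉ S₂ ∪ T' := by
            simp only [Finset.mem_union]
            rintro (h | h)
            · exact haS₂ h
            · exact haT' h
          have hUS : S₂ ∪ T' ⊆ S := Finset.union_subset hS₂S (hT'sub.trans hS₁S)
          have hUerase : S₂ ∪ T' ⊆ S.erase a := by
            intro y hy
            exact Finset.mem_erase.mpr ⟨fun h => haU (h ▸ hy), hUS hy⟩
          have hcardlt : (S₂ ∪ T').card < N := by
            calc (S₂ ∪ T').card ≤ (S.erase a).card := Finset.card_le_card hUerase
              _ < S.card := Finset.card_erase_lt_of_mem haS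
              _ = N := hScard
          have hA' : ((A a ∩ CF (S₂ ∪ T')).card : ℝ) ≤ x a * ((CF (S₂ ∪ T')).card : ℝ) :=
            IH _ hcardlt _ (hUS.trans hSI) rfl a haI haU
          have heq : S₂ ∪ insert a T' = insert a (S₂ ∪ T') := by
            rw [Finset.union_insert]
          rw [heq, CF_insert, card_sdiff_real, Finset.prod_insert haT']
          have h1xa : 0 ≤ 1 - x a := by linarith [hx1 a haI]
          have hprev := IHT hT'sub
          have hxa0 := hx0 a haI
          have hprod0 : (0:ℝ) ≤ ∏ j ∈ T', (1 - x j) :=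
            Finset.prod_nonneg (fun j hj => by linarith [hx1 j (hSI (hS₁S (hT'sub hj)))])
          have c1 : (0:ℝ) ≤ ((CF S₂).card : ℝ) := Nat.cast_nonneg _
          have c2 : (0:ℝ) ≤ ((CF (S₂ ∪ T')).card : ℝ) := Nat.cast_nonneg _
          nlinarith
      -- independence
      have hind : ((A i ∩ CF S₂).card : ℝ) * Ω = ((A i).card : ℝ) * ((CF S₂).card : ℝ) := by
        have := indep_card_s9 (vbl i) (A i) (CF S₂)
          (hdep i hiI)
          (by
            intro ω ω' hagree hω
            rw [CF_mem] at hω ⊢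
            intro j hj hmem
            have hdisj : Disjoint (vbl i) (vbl j) := (Finset.mem_filter.mp hj).2
            have hjI : j ∈ I := hSI (hS₂S hj)
            refine hω j hj (hdep j hjI ω' ω ?_ hmem)
            intro v hv
            have : v ∉ vbl i := Finset.disjoint_right.mp hdisj hv
            exact (hagree v this).symm)
        rw [hΩdef]
        exact_mod_cast congrArg (Nat.cast : ℕ → ℝ) this
      -- Γ and product comparison
      set Γ : Finset ι := I.filter (fun j => j ≠ i ∧ ¬ Disjoint (vbl i) (vbl j)) with hΓdef
      have hS₁Γ : S₁ ⊆ Γ := by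
        intro j hj
        rw [hS₁def, Finset.mem_filter] at hj
        rw [hΓdef, Finset.mem_filter]
        exact ⟨hSI hj.1, fun h => hiS (h ▸ hj.1), hj.2⟩
      have hprodΓ : (∏ j ∈ Γ, (1 - x j)) ≤ ∏ j ∈ S₁, (1 - x j) := by
        rw [← Finset.prod_sdiff hS₁Γ]
        have h1 : (∏ j ∈ Γ \ S₁, (1 - x j)) ≤ 1 :=
          Finset.prod_le_one
            (fun j hj => by linarith [hx1 j (Finset.mem_filter.mp (Finset.mem_sdiff.mp hj).1).1])
            (fun j hj => by linarith [hx0 j (Finset.mem_filter.mp (Finset.mem_sdiff.mp hj).1).1])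
        have h2 : 0 ≤ ∏ j ∈ S₁, (1 - x j) :=
          Finset.prod_nonneg (fun j hj => by linarith [hx1 j (hSI (hS₁S hj))])
        nlinarith
      -- assemble
      have a1 : ((A i ∩ CF S).card : ℝ) ≤ ((A i ∩ CF S₂).card : ℝ) := by
        exact_mod_cast Finset.card_le_card
          (Finset.inter_subset_inter (Finset.Subset.refl _) (CF_anti _ _ hS₂S))
      have a3 := hP i hiI
      have a5 : (∏ j ∈ S₁, (1 - x j)) * ((CF S₂).card : ℝ) ≤ ((CF S).card : ℝ) := by
        have := peel S₁ (Finset.Subset.refl _)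
        rwa [hunion] at this
      have hxi := hx0 i hiI
      rw [← mul_le_mul_iff_of_pos_right hΩpos]
      calc ((A i ∩ CF S).card : ℝ) * Ω ≤ ((A i ∩ CF S₂).card : ℝ) * Ω := by
            exact mul_le_mul_of_nonneg_right a1 (le_of_lt hΩpos)
        _ = ((A i).card : ℝ) * ((CF S₂).card : ℝ) := hind
        _ ≤ (x i * (∏ j ∈ Γ, (1 - x j)) * Ω) * ((CF S₂).card : ℝ) :=
            mul_le_mul_of_nonneg_right a3 (Nat.cast_nonneg _)
        _ ≤ (x i * (∏ j ∈ S₁, (1 - x j)) * Ω) * ((CF S₂).card : ℝ) := by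
            exact mul_le_mul_of_nonneg_right (mul_le_mul_of_nonneg_right
              (mul_le_mul_of_nonneg_left hprodΓ hxi) hΩpos.le) (Nat.cast_nonneg _)
        _ = (x i * Ω) * ((∏ j ∈ S₁, (1 - x j)) * ((CF S₂).card : ℝ)) := by ring
        _ ≤ (x i * Ω) * ((CF S).card : ℝ) := by
            apply mul_le_mul_of_nonneg_left a5 (by positivity)
        _ = x i * ((CF S).card : ℝ) * Ω := by ring
  -- second lemma
  have P2 : ∀ S : Finset ι, S ⊆ I → (∏ j ∈ S, (1 - x j)) * Ω ≤ ((CF S).card : ℝ) := by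
    intro S
    induction S using Finset.induction_on with
    | empty => intro _; simp [CF_empty, hΩdef]
    | @insert a S' haS' IHS =>
      intro hsub
      have haI : a ∈ I := hsub (Finset.mem_insert_self _ _)
      have hS'I : S' ⊆ I := fun y hy => hsub (Finset.mem_insert_of_mem hy)
      have hA' : ((A a ∩ CF S').card : ℝ) ≤ x a * ((CF S').card : ℝ) :=
        P1 S'.card S' hS'I rfl a haI haS'
      rw [CF_insert, card_sdiff_real, Finset.prod_insert haS']
      have h1xa : 0 ≤ 1 - x a := by linarith [hx1 a haI]
      have hprev := IHS hS'I
      have hprod0 : (0:ℝ) ≤ ∏ j ∈ S', (1 - x j) :=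
        Finset.prod_nonneg (fun j hj => by linarith [hx1 j (hS'I hj)])
      have c1 : (0:ℝ) ≤ ((CF S').card : ℝ) := Nat.cast_nonneg _
      nlinarith [hx0 a haI, hΩpos.le]
  have hprodpos : 0 < ∏ j ∈ I, (1 - x j) :=
    Finset.prod_pos (fun j hj => by linarith [hx1 j hj])
  have hfinal : (0:ℝ) < ((CF I).card : ℝ) :=
    lt_of_lt_of_le (by positivity) (P2 I (Finset.Subset.refl _))
  have : (CF I).Nonempty := Finset.card_pos.mp (by exact_mod_cast hfinal)
  obtain ⟨ω, hω⟩ := this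
  exact ⟨ω, (CF_mem I ω).mp hω⟩

theorem count_avoid {n k : ℕ} (s₀ : Finset (Fin n)) (ℓ : Fin k) :
    (univ.filter (fun χ : Fin n → Fin k => ∀ u ∈ s₀, χ u ≠ ℓ)).card
      = (k-1)^(s₀.card) * k^(n - s₀.card) := by
  classical
  have hset : (univ.filter (fun χ : Fin n → Fin k => ∀ u ∈ s₀, χ u ≠ ℓ))
      = Fintype.piFinset (fun v => if v ∈ s₀ then (univ : Finset (Fin k)).erase ℓ else univ) := by
    ext χ
    simp only [Finset.mem_filter, Finset.mem_univ, true_and, Fintype.mem_piFinset]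
    constructor
    · intro h v
      by_cases hv : v ∈ s₀
      · simp [hv, Finset.mem_erase, h v hv]
      · simp [hv]
    · intro h u hu
      have := h u
      simp [hu, Finset.mem_erase] at this
      exact this
  rw [hset, Fintype.card_piFinset]
  have hcard : ∀ v : Fin n, (if v ∈ s₀ then (univ : Finset (Fin k)).erase ℓ else univ).card
      = if v ∈ s₀ then k - 1 else k := by
    intro v
    split_ifs
    · rw [Finset.card_erase_of_mem (Finset.mem_univ _), Finset.card_univ, Fintype.card_fin]
    · rw [Finset.card_univ, Fintype.card_fin]
  simp_rw [hcard]
  rw [Finset.prod_ite, Finset.prod_const, Finset.prod_const]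
  have h1 : univ.filter (fun v => v ∈ s₀) = s₀ := by simp
  have h2 : (univ.filter (fun v => v ∉ s₀)).card = n - s₀.card := by
    simp [Finset.filter_not, Finset.card_sdiff_of_subset (Finset.subset_univ _)]
  rw [h1, h2]

theorem key_ineq (t k m : ℕ) (hk : 2 ≤ k) (ht : 1 ≤ t) (hm1 : 1 ≤ m)
    (h1 : (100:ℝ) * k * Real.log ((t:ℝ)*k+2) ≤ m)
    (h2 : (m:ℝ) ≤ 100 * k * Real.log ((t:ℝ)*k+2) + 1) :
    (1 - 1/(k:ℝ))^m ≤
      (1/(((k*m*t : ℕ):ℝ) + 1)) * (1 - 1/(((k*m*t : ℕ):ℝ) + 1))^(k*m*t) := by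
  have hk' : (2:ℝ) ≤ (k:ℝ) := by exact_mod_cast hk
  have ht' : (1:ℝ) ≤ (t:ℝ) := by exact_mod_cast ht
  have hm1' : (1:ℝ) ≤ (m:ℝ) := by exact_mod_cast hm1
  set K' : ℝ := (t:ℝ)*k+2 with hK'def
  set L : ℝ := Real.log K' with hLdef
  have hK4 : (4:ℝ) ≤ K' := by nlinarith
  have hK0 : (0:ℝ) < K' := by linarith
  have hL2 : Real.log 2 ≤ L := Real.log_le_log (by norm_num) (by linarith)
  have hlog2 : (0.6931471803 : ℝ) < Real.log 2 := Real.log_two_gt_d9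
  have hL0 : 0 < L := by linarith
  have hD1 : 1 ≤ k*m*t := Nat.one_le_iff_ne_zero.mpr (by positivity)
  set D' : ℝ := ((k*m*t : ℕ):ℝ) with hD'def
  have hD'1 : (1:ℝ) ≤ D' := by rw [hD'def]; exact_mod_cast hD1
  have hD'eq : D' = (k:ℝ)*m*t := by rw [hD'def]; push_cast; ring
  -- step B : D' + 1 ≤ K'^10
  have hLK : L ≤ K' := by
    have := Real.log_le_sub_one_of_pos hK0
    linarith
  have hkt : (k:ℝ)*t ≤ K' := by nlinarith
  have hk2t : (k:ℝ)*k*t ≤ K'^2 := by nlinarith [sq_nonneg ((t:ℝ)*k), mul_pos (by linarith : (0:ℝ) < t) (by linarith : (0:ℝ) < k)]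
  have hB : D' + 1 ≤ K'^10 := by
    have e1 : D' ≤ ((k:ℝ)*t)*(100*k*L + 1) := by
      have h' : D' = ((k:ℝ)*t)*m := by rw [hD'eq]; ring
      rw [h']
      exact mul_le_mul_of_nonneg_left h2 (by positivity)
    have e2 : ((k:ℝ)*t)*(100*k*L + 1) = 100*((k:ℝ)*k*t)*L + k*t := by ring
    have e3 : 100*((k:ℝ)*k*t)*L ≤ 100*(K'^2*K') :=
      by nlinarith [mul_le_mul hk2t hLK hL0.le (by positivity : (0:ℝ) ≤ K'^2)]
    have e3' : K'^2*K' = K'^3 := by ring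
    have hK3 : K' ≤ K'^3 := by nlinarith
    have h1K3 : (1:ℝ) ≤ K'^3 := by nlinarith
    have e5 : D' + 1 ≤ 102*K'^3 := by linarith
    have e6 : (102:ℝ) ≤ K'^7 := by
      calc (102:ℝ) ≤ 4^7 := by norm_num
        _ ≤ K'^7 := pow_le_pow_left₀ (by norm_num) hK4 7
    have e7 : 102*K'^3 ≤ K'^10 := by
      have : K'^7 * K'^3 = K'^10 := by ring
      nlinarith [pow_nonneg hK0.le 3]
    linarith
  -- step A : (1 - 1/k)^m ≤ exp (-(m/k))
  have hk0 : (0:ℝ) < k := by linarith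
  have hA : (1 - 1/(k:ℝ))^m ≤ Real.exp (-((m:ℝ)/k)) := by
    have base : 1 - 1/(k:ℝ) ≤ Real.exp (-(1/k)) := by
      have := Real.add_one_le_exp (-(1/(k:ℝ)))
      linarith
    have nonneg : (0:ℝ) ≤ 1 - 1/(k:ℝ) := by
      have h' : 1/(k:ℝ) ≤ 1 := by
        rw [div_le_one hk0]; linarith
      linarith
    calc (1 - 1/(k:ℝ))^m ≤ (Real.exp (-(1/k)))^m := pow_le_pow_left₀ nonneg base m
      _ = Real.exp ((m:ℕ) * -(1/(k:ℝ))) := (Real.exp_nat_mul _ m).symm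
      _ = Real.exp (-((m:ℝ)/k)) := by congr 1; field_simp
  -- step C/E : exponent comparison
  have hC : Real.log (D' + 1) ≤ 10 * L := by
    calc Real.log (D' + 1) ≤ Real.log (K'^10) := Real.log_le_log (by linarith) hB
      _ = 10 * L := by rw [Real.log_pow]; push_cast; ring
  have hE : 1 + Real.log (D' + 1) ≤ (m:ℝ)/k := by
    have hmk : 100 * L ≤ (m:ℝ)/k := by
      rw [le_div_iff₀ hk0]
      calc 100 * L * k = 100 * k * L := by ring
        _ ≤ m := h1
    have : 1 ≤ 90 * L := by nlinarith
    linarith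
  have hDpos : (0:ℝ) < D' + 1 := by linarith
  have hF : Real.exp (-(1 + Real.log (D' + 1))) = Real.exp (-1) * (1/(D'+1)) := by
    rw [neg_add, Real.exp_add, Real.exp_neg (Real.log (D'+1)), Real.exp_log hDpos]
    ring
  have hG : Real.exp (-1) ≤ (1 - 1/(D'+1))^(k*m*t) := by
    have hD'0 : (0:ℝ) < D' := by linarith
    have base : Real.exp (-(1/D')) ≤ 1 - 1/(D'+1) := by
      have h' : 1 + 1/D' ≤ Real.exp (1/D') := by
        have := Real.add_one_le_exp (1/D'); linarith
      have heq : 1 - 1/(D'+1) = D'/(D'+1) := by field_simp; ring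
      rw [heq, Real.exp_neg, inv_eq_one_div,
        div_le_div_iff₀ (Real.exp_pos _) (by linarith : (0:ℝ) < D' + 1)]
      have hmm : D' * (1 + 1/D') = D' + 1 := by field_simp
      nlinarith [Real.exp_pos (1/D')]
    calc Real.exp (-1) = Real.exp (((k*m*t : ℕ):ℕ) * -(1/D')) := by
          congr 1
          rw [hD'def]
          have hne : (((k*m*t : ℕ):ℝ)) ≠ 0 := by positivity
          field_simp
      _ = (Real.exp (-(1/D')))^(k*m*t) := (Real.exp_nat_mul _ _)
      _ ≤ (1 - 1/(D'+1))^(k*m*t) := pow_le_pow_left₀ (Real.exp_pos _).le base _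
  have hmono : Real.exp (-((m:ℝ)/k)) ≤ Real.exp (-(1 + Real.log (D' + 1))) :=
    Real.exp_le_exp.mpr (by linarith)
  calc (1 - 1/(k:ℝ))^m ≤ Real.exp (-((m:ℝ)/k)) := hA
    _ ≤ Real.exp (-(1 + Real.log (D' + 1))) := hmono
    _ = Real.exp (-1) * (1/(D'+1)) := hF
    _ ≤ (1 - 1/(D'+1))^(k*m*t) * (1/(D'+1)) :=
        mul_le_mul_of_nonneg_right hG (by positivity)
    _ = (1/(D'+1)) * (1 - 1/(D'+1))^(k*m*t) := by ring

/-- there is a universal constant `C > 0` such that for any `k ≥ 2` and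
any collection of subsets of `[n]`, each of size at least `C · k · ln(tk + 2)` and
with every element in at most `t` sets, there is a `k`-coloring making every set a
`k`-rainbow set. -/
theorem rainbow_coloring_exists :
    ∃ C : ℝ, 0 < C ∧
      ∀ (n t k : ℕ) (𝒮 : Multiset (Finset (Fin n))),
        2 ≤ k →
        (∀ j : Fin n, (𝒮.filter (fun s' => j ∈ s')).card ≤ t) →
        (∀ s' ∈ 𝒮, C * k * Real.log ((t : ℝ) * k + 2) ≤ (s'.card : ℝ)) →
        ∃ χ : Fin n → Fin k, ∀ s' ∈ 𝒮, ∀ ℓ : Fin k, ∃ u ∈ s', χ u = ℓ := by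
  classical
  refine ⟨100, by norm_num, ?_⟩
  intro n t k 𝒮 hk hdeg hsize
  have hkpos : 0 < k := by omega
  haveI : Nonempty (Fin k) := ⟨⟨0, hkpos⟩⟩
  by_cases h𝒮 : 𝒮 = 0
  · subst h𝒮
    exact ⟨fun _ => Classical.arbitrary _, by simp⟩
  obtain ⟨s₀, hs₀⟩ := Multiset.exists_mem_of_ne_zero h𝒮
  have hkR : (2:ℝ) ≤ (k:ℝ) := by exact_mod_cast hk
  set L : ℝ := Real.log ((t:ℝ)*k+2) with hLdef
  have hL0 : 0 < L := by
    apply Real.log_pos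
    have : (0:ℝ) ≤ (t:ℝ)*k := by positivity
    linarith
  have hkLpos : (0:ℝ) < 100*k*L := by nlinarith
  set m : ℕ := ⌈(100:ℝ)*k*L⌉₊ with hmdef
  have hm_lb : (100:ℝ)*k*L ≤ m := Nat.le_ceil _
  have hm_ub : (m:ℝ) ≤ 100*k*L + 1 := (Nat.ceil_lt_add_one hkLpos.le).le
  have hm1 : 1 ≤ m := Nat.ceil_pos.mpr hkLpos
  have hm_le : ∀ s ∈ 𝒮, m ≤ s.card := fun s hs => Nat.ceil_le.mpr (hsize s hs)
  -- t ≥ 1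
  have ht : 1 ≤ t := by
    have hcard : 1 ≤ s₀.card := le_trans hm1 (hm_le s₀ hs₀)
    obtain ⟨u₀, hu₀⟩ := Finset.card_pos.mp hcard
    have hmem : s₀ ∈ 𝒮.filter (fun s' => u₀ ∈ s') := Multiset.mem_filter.mpr ⟨hs₀, hu₀⟩
    have : 0 < (𝒮.filter (fun s' => u₀ ∈ s')).card := by
      rw [Multiset.card_pos]
      exact fun h => by simp [h] at hmem
    exact le_trans this (hdeg u₀)
  -- truncation
  have trex : ∀ s : Finset (Fin n), ∃ u : Finset (Fin n), u ⊆ s ∧ (m ≤ s.card → u.card = m) := by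
    intro s
    by_cases h : m ≤ s.card
    · obtain ⟨u, hu1, hu2⟩ := Finset.exists_subset_card_eq h
      exact ⟨u, hu1, fun _ => hu2⟩
    · exact ⟨s, Finset.Subset.refl s, fun h' => absurd h' h⟩
  choose tr htr_sub htr_card using trex
  -- set up LLL data
  set D' : ℝ := ((k*m*t : ℕ):ℝ) with hD'def
  have hDnat1 : 1 ≤ k*m*t := Nat.one_le_iff_ne_zero.mpr (by positivity)
  have hD'1 : (1:ℝ) ≤ D' := by rw [hD'def]; exact_mod_cast hDnat1
  set I : Finset (Finset (Fin n) × Fin k) := 𝒮.toFinset ×ˢ univ with hIdef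
  set A : Finset (Fin n) × Fin k → Finset (Fin n → Fin k) :=
    fun p => univ.filter (fun χ : Fin n → Fin k => ∀ u ∈ tr p.1, χ u ≠ p.2) with hAdef
  set vbl : Finset (Fin n) × Fin k → Finset (Fin n) := fun p => tr p.1 with hvbldef
  set x : Finset (Fin n) × Fin k → ℝ := fun _ => 1/(D'+1) with hxdef
  have hx0 : ∀ p ∈ I, 0 ≤ x p := fun p _ => by rw [hxdef]; positivity
  have hx1 : ∀ p ∈ I, x p < 1 := fun p _ => by
    rw [hxdef]
    simp only
    rw [div_lt_one (by linarith)]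
    linarith
  have hdep' : ∀ p ∈ I, ∀ ω ω' : Fin n → Fin k,
      (∀ v ∈ vbl p, ω v = ω' v) → ω ∈ A p → ω' ∈ A p := by
    intro p _ ω ω' hag hω
    rw [hAdef, Finset.mem_filter] at hω ⊢
    exact ⟨Finset.mem_univ _, fun u hu => by rw [← hag u hu]; exact hω.2 u hu⟩
  have hP : ∀ p ∈ I, ((A p).card : ℝ) ≤
      x p * (∏ j ∈ I.filter (fun j => j ≠ p ∧ ¬ Disjoint (vbl p) (vbl j)), (1 - x j)) *
        (Fintype.card (Fin n → Fin k) : ℝ) := by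
    rintro ⟨s, ℓ⟩ hp
    have hs𝒮 : s ∈ 𝒮 := Multiset.mem_toFinset.mp (Finset.mem_product.mp hp).1
    have htscard : (tr s).card = m := htr_card s (hm_le s hs𝒮)
    have hmn : m ≤ n := by
      rw [← htscard]
      calc (tr s).card ≤ Fintype.card (Fin n) := Finset.card_le_univ _
        _ = n := Fintype.card_fin n
    have cardA : (A (s,ℓ)).card = (k-1)^m * k^(n-m) := by
      rw [hAdef]
      simp only
      rw [count_avoid (tr s) ℓ, htscard]
    have cardΩ : Fintype.card (Fin n → Fin k) = k^n := by
      rw [Fintype.card_fun, Fintype.card_fin, Fintype.card_fin]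
    -- degree bound
    have hΓcard : (I.filter (fun j => j ≠ (s,ℓ) ∧ ¬ Disjoint (vbl (s,ℓ)) (vbl j))).card
        ≤ k*m*t := by
      have hsub1 : I.filter (fun j => j ≠ (s,ℓ) ∧ ¬ Disjoint (vbl (s,ℓ)) (vbl j))
          ⊆ (𝒮.toFinset.filter (fun s' => ¬ Disjoint (tr s) (tr s'))) ×ˢ univ := by
        intro j hj
        rw [Finset.mem_filter] at hj
        obtain ⟨hjI, _, hnd⟩ := hj
        rw [Finset.mem_product]
        exact ⟨Finset.mem_filter.mpr ⟨(Finset.mem_product.mp hjI).1, hnd⟩, Finset.mem_univ _⟩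
      have hsub2 : 𝒮.toFinset.filter (fun s' => ¬ Disjoint (tr s) (tr s'))
          ⊆ (tr s).biUnion (fun u => 𝒮.toFinset.filter (fun s' => u ∈ s')) := by
        intro s' hs'
        rw [Finset.mem_filter] at hs'
        obtain ⟨hs'𝒮, hnd⟩ := hs'
        obtain ⟨u, hu1, hu2⟩ := Finset.not_disjoint_iff.mp hnd
        exact Finset.mem_biUnion.mpr ⟨u, hu1,
          Finset.mem_filter.mpr ⟨hs'𝒮, htr_sub s' hu2⟩⟩
      have hper : ∀ u : Fin n, (𝒮.toFinset.filter (fun s' => u ∈ s')).card ≤ t := by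
        intro u
        calc (𝒮.toFinset.filter (fun s' => u ∈ s')).card
            = (𝒮.filter (fun s' => u ∈ s')).toFinset.card := by
              rw [Multiset.toFinset_filter]
          _ ≤ (𝒮.filter (fun s' => u ∈ s')).card := Multiset.toFinset_card_le _
          _ ≤ t := hdeg u
      calc (I.filter (fun j => j ≠ (s,ℓ) ∧ ¬ Disjoint (vbl (s,ℓ)) (vbl j))).card
          ≤ ((𝒮.toFinset.filter (fun s' => ¬ Disjoint (tr s) (tr s'))) ×ˢ
              (univ : Finset (Fin k))).card := Finset.card_le_card hsub1
        _ = (𝒮.toFinset.filter (fun s' => ¬ Disjoint (tr s) (tr s'))).card * k := by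
            rw [Finset.card_product, Finset.card_univ, Fintype.card_fin]
        _ ≤ ((tr s).biUnion (fun u => 𝒮.toFinset.filter (fun s' => u ∈ s'))).card * k :=
            Nat.mul_le_mul_right _ (Finset.card_le_card hsub2)
        _ ≤ (∑ u ∈ tr s, (𝒮.toFinset.filter (fun s' => u ∈ s')).card) * k :=
            Nat.mul_le_mul_right _ (Finset.card_biUnion_le)
        _ ≤ ((tr s).card * t) * k := by
            apply Nat.mul_le_mul_right
            calc (∑ u ∈ tr s, (𝒮.toFinset.filter (fun s' => u ∈ s')).card)
                ≤ ∑ _u ∈ tr s, t := Finset.sum_le_sum (fun u _ => hper u)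
              _ = (tr s).card * t := by rw [Finset.sum_const, smul_eq_mul]
        _ = k*m*t := by rw [htscard]; ring
    -- product bound
    have h1x0 : (0:ℝ) ≤ 1 - 1/(D'+1) := by
      have : 1/(D'+1) ≤ 1 := by
        rw [div_le_one (by linarith)]; linarith
      linarith
    have h1x1 : 1 - 1/(D'+1) ≤ 1 := by
      have : (0:ℝ) ≤ 1/(D'+1) := by positivity
      linarith
    have hprodΓ : (1 - 1/(D'+1))^(k*m*t) ≤
        ∏ j ∈ I.filter (fun j => j ≠ (s,ℓ) ∧ ¬ Disjoint (vbl (s,ℓ)) (vbl j)), (1 - x j) := by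
      rw [hxdef]
      simp only
      rw [Finset.prod_const]
      exact pow_le_pow_of_le_one h1x0 h1x1 hΓcard
    -- cast & assemble
    have hcast : ((A (s,ℓ)).card : ℝ) = (1 - 1/(k:ℝ))^m * (k:ℝ)^n := by
      rw [cardA]
      push_cast [Nat.cast_sub (show 1 ≤ k by omega)]
      have hksplit : ((k:ℝ))^n = (k:ℝ)^m * (k:ℝ)^(n-m) := by
        rw [← pow_add, Nat.add_sub_cancel' hmn]
      have hfac : ((k:ℝ)-1) = (k:ℝ) * (1 - 1/k) := by
        field_simp
      rw [hfac, mul_pow, hksplit]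
      ring
    have hkey := key_ineq t k m hk ht hm1 hm_lb hm_ub
    have hknR : (0:ℝ) ≤ (k:ℝ)^n := by positivity
    calc ((A (s,ℓ)).card : ℝ) = (1 - 1/(k:ℝ))^m * (k:ℝ)^n := hcast
      _ ≤ ((1/(D'+1)) * (1 - 1/(D'+1))^(k*m*t)) * (k:ℝ)^n := by
          apply mul_le_mul_of_nonneg_right _ hknR
          rw [hD'def]
          exact hkey
      _ ≤ ((1/(D'+1)) *
            (∏ j ∈ I.filter (fun j => j ≠ (s,ℓ) ∧ ¬ Disjoint (vbl (s,ℓ)) (vbl j)), (1 - x j)))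
            * (k:ℝ)^n := by
          apply mul_le_mul_of_nonneg_right _ hknR
          apply mul_le_mul_of_nonneg_left hprodΓ (by positivity)
      _ = x (s,ℓ) *
            (∏ j ∈ I.filter (fun j => j ≠ (s,ℓ) ∧ ¬ Disjoint (vbl (s,ℓ)) (vbl j)), (1 - x j))
            * (Fintype.card (Fin n → Fin k) : ℝ) := by
          rw [cardΩ, hxdef]
          push_cast
          ring
  obtain ⟨χ, hχ⟩ := LLL I A vbl hdep' x hx0 hx1 hP
  refine ⟨χ, fun s hs ℓ => ?_⟩
  have hp : (s, ℓ) ∈ I := Finset.mem_product.mpr ⟨Multiset.mem_toFinset.mpr hs, Finset.mem_univ ℓ⟩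
  have hnot := hχ _ hp
  rw [hAdef, Finset.mem_filter] at hnot
  push_neg at hnot
  obtain ⟨u, hu, hval⟩ := hnot (Finset.mem_univ _)
  exact ⟨u, htr_sub s hu, hval⟩
end
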